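/- arXiv:2512.24441 — 5 statements merged into one kernel-verified Lean document; each statement's English description precedes it below -/
import Mathlib

section
/- Let V and W be complete separable metric spaces, V' ⊆ V a Borel set, and 𝔑 a set of Borel probability measures on V with η(V') = 1 for all η ∈ 𝔑. Let τ : V' → W be a Borel map. Suppose for every ε > 0 there exist R ≥ 1 and a Borel set V(ε) ⊆ V' with sup_{η∈𝔑} η(V' \ V(ε)) < ε and R⁻¹ ≤ d_W(τx, τy)/d_V(x,y) ≤ R for all distinct x, y ∈ V(ε). Then the induced pushforward map τ_* : 𝔑 → 𝔐₁(W), η ↦ τ_* η, is injective and is a homeomorphism onto its image with respect to the weak topologies. -/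
open MeasureTheory Topology Metric Set
open scoped ENNReal NNReal

namespace Stmt1Aux

set_option linter.unusedSectionVars false

variable {V : Type*} [MetricSpace V] [MeasurableSpace V] [BorelSpace V]
variable {W : Type*} [MetricSpace W] [MeasurableSpace W] [BorelSpace W]

lemma meas_le_inter {V' Vε : Set V} (η : Measure V) [IsProbabilityMeasure η]
    (hV' : MeasurableSet V') (hfull : η V' = 1) (hsub : Vε ⊆ V')
    {ε : ℝ} (hsmall : η (V' \ Vε) < ENNReal.ofReal ε) (S : Set V) :
    η S ≤ η (S ∩ Vε) + ENNReal.ofReal ε := by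
  have hcompl : η V'ᶜ = 0 := (prob_compl_eq_zero_iff hV').2 hfull
  have hsubset : S ⊆ (S ∩ Vε) ∪ ((V' \ Vε) ∪ V'ᶜ) := by
    intro x hx
    by_cases hxε : x ∈ Vε
    · exact Or.inl ⟨hx, hxε⟩
    · by_cases hxV : x ∈ V'
      · exact Or.inr (Or.inl ⟨hxV, hxε⟩)
      · exact Or.inr (Or.inr hxV)
  calc η S ≤ η ((S ∩ Vε) ∪ ((V' \ Vε) ∪ V'ᶜ)) := measure_mono hsubset
    _ ≤ η (S ∩ Vε) + η ((V' \ Vε) ∪ V'ᶜ) := measure_union_le _ _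
    _ ≤ η (S ∩ Vε) + (η (V' \ Vε) + η V'ᶜ) := by
        gcongr
        exact measure_union_le _ _
    _ ≤ η (S ∩ Vε) + ENNReal.ofReal ε := by
        rw [hcompl, add_zero]
        gcongr


lemma keyA {V' Vε : Set V} (hV' : MeasurableSet V') {τ : V → W} (hτ : Measurable τ)
    (η₁ η₂ : Measure V) [IsProbabilityMeasure η₁] [IsProbabilityMeasure η₂]
    (hfull₁ : η₁ V' = 1) (hfull₂ : η₂ V' = 1)
    {ε R : ℝ} (hR : 1 ≤ R) (hVm : MeasurableSet Vε) (hsub : Vε ⊆ V')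
    (hsmall₁ : η₁ (V' \ Vε) < ENNReal.ofReal ε) (hsmall₂ : η₂ (V' \ Vε) < ENNReal.ofReal ε)
    (hlip : ∀ x ∈ Vε, ∀ y ∈ Vε, dist (τ x) (τ y) ≤ R * dist x y)
    {δ : ℝ≥0∞} (hδ : levyProkhorovEDist η₁ η₂ < δ)
    {B : Set W} (hB : MeasurableSet B) :
    η₁.map τ B ≤ η₂.map τ (thickening (R * δ.toReal) B) + δ + 2 * ENNReal.ofReal ε := by
  have hR0 : (0:ℝ) < R := lt_of_lt_of_le one_pos hR
  set A : Set V := τ ⁻¹' B ∩ Vε with hA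
  have hAm : MeasurableSet A := (hτ hB).inter hVm
  have hsubs : thickening δ.toReal A ∩ Vε ⊆ τ ⁻¹' (thickening (R * δ.toReal) B) := by
    rintro x ⟨hx1, hx2⟩
    obtain ⟨z, hzA, hxz⟩ := mem_thickening_iff.1 hx1
    refine mem_preimage.2 (mem_thickening_iff.2 ⟨τ z, hzA.1, ?_⟩)
    calc dist (τ x) (τ z) ≤ R * dist x z := hlip x hx2 z hzA.2
      _ < R * δ.toReal := by
          exact mul_lt_mul_of_pos_left hxz hR0
  calc η₁.map τ B = η₁ (τ ⁻¹' B) := Measure.map_apply hτ hB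
    _ ≤ η₁ A + ENNReal.ofReal ε := meas_le_inter η₁ hV' hfull₁ hsub hsmall₁ _
    _ ≤ (η₂ (thickening δ.toReal A) + δ) + ENNReal.ofReal ε := by
        gcongr
        exact left_measure_le_of_levyProkhorovEDist_lt hδ hAm
    _ ≤ ((η₂ (thickening δ.toReal A ∩ Vε) + ENNReal.ofReal ε) + δ) + ENNReal.ofReal ε := by
        gcongr
        exact meas_le_inter η₂ hV' hfull₂ hsub hsmall₂ _
    _ ≤ ((η₂ (τ ⁻¹' (thickening (R * δ.toReal) B)) + ENNReal.ofReal ε) + δ) + ENNReal.ofReal ε := by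
        gcongr
        
    _ = η₂.map τ (thickening (R * δ.toReal) B) + δ + 2 * ENNReal.ofReal ε := by
        rw [Measure.map_apply hτ isOpen_thickening.measurableSet]
        ring


lemma keyB [StandardBorelSpace V] [MeasurableSpace.CountablySeparated W]
    {V' Vε : Set V} (hV' : MeasurableSet V') {τ : V → W} (hτ : Measurable τ)
    (η₁ η₂ : Measure V) [IsProbabilityMeasure η₁] [IsProbabilityMeasure η₂]
    (hfull₁ : η₁ V' = 1) (hfull₂ : η₂ V' = 1)
    {ε R : ℝ} (hR : 1 ≤ R) (hVm : MeasurableSet Vε) (hsub : Vε ⊆ V')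
    (hsmall₁ : η₁ (V' \ Vε) < ENNReal.ofReal ε) (hsmall₂ : η₂ (V' \ Vε) < ENNReal.ofReal ε)
    (hlow : ∀ x ∈ Vε, ∀ y ∈ Vε, dist x y ≤ R * dist (τ x) (τ y))
    {δ : ℝ≥0∞} (hδ0 : 0 < δ) (hδtop : δ ≠ ∞)
    (hδ : levyProkhorovEDist (η₁.map τ) (η₂.map τ) < δ)
    {B : Set V} (hB : MeasurableSet B) :
    η₁ B ≤ η₂ (thickening (R * δ.toReal) B) + δ + 2 * ENNReal.ofReal ε := by
  have hR0 : (0:ℝ) < R := lt_of_lt_of_le one_pos hR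
  have hδr : 0 < δ.toReal := ENNReal.toReal_pos hδ0.ne' hδtop
  have hinj : Set.InjOn τ Vε := by
    intro x hx y hy hxy
    by_contra hne
    have h1 : dist x y ≤ R * dist (τ x) (τ y) := hlow x hx y hy
    rw [hxy, dist_self, mul_zero] at h1
    exact hne (dist_le_zero.1 h1)
  set C : Set W := τ '' (B ∩ Vε) with hC
  have hCm : MeasurableSet C :=
    (hB.inter hVm).image_of_measurable_injOn hτ (hinj.mono inter_subset_right)
  have hsubs : τ ⁻¹' (thickening δ.toReal C) ∩ Vε ⊆ thickening (R * δ.toReal) B := by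
    rintro x ⟨hx1, hx2⟩
    obtain ⟨w, hwC, hxw⟩ := mem_thickening_iff.1 (mem_preimage.1 hx1)
    obtain ⟨y, hyB, rfl⟩ := hwC
    refine mem_thickening_iff.2 ⟨y, hyB.1, ?_⟩
    calc dist x y ≤ R * dist (τ x) (τ y) := hlow x hx2 y hyB.2
      _ < R * δ.toReal := mul_lt_mul_of_pos_left hxw hR0
  calc η₁ B ≤ η₁ (B ∩ Vε) + ENNReal.ofReal ε := meas_le_inter η₁ hV' hfull₁ hsub hsmall₁ _
    _ ≤ η₁ (τ ⁻¹' C) + ENNReal.ofReal ε := by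
        have : B ∩ Vε ⊆ τ ⁻¹' C := by
          rw [hC]; exact Set.subset_preimage_image τ (B ∩ Vε)
        gcongr
        
    _ = η₁.map τ C + ENNReal.ofReal ε := by rw [Measure.map_apply hτ hCm]
    _ ≤ (η₂.map τ (thickening δ.toReal C) + δ) + ENNReal.ofReal ε := by
        gcongr
        exact left_measure_le_of_levyProkhorovEDist_lt hδ hCm
    _ = (η₂ (τ ⁻¹' (thickening δ.toReal C)) + δ) + ENNReal.ofReal ε := by
        rw [Measure.map_apply hτ isOpen_thickening.measurableSet]
    _ ≤ ((η₂ (τ ⁻¹' (thickening δ.toReal C) ∩ Vε) + ENNReal.ofReal ε) + δ) + ENNReal.ofReal ε := by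
        gcongr
        exact meas_le_inter η₂ hV' hfull₂ hsub hsmall₂ _
    _ ≤ ((η₂ (thickening (R * δ.toReal) B) + ENNReal.ofReal ε) + δ) + ENNReal.ofReal ε := by
        gcongr
    _ = η₂ (thickening (R * δ.toReal) B) + δ + 2 * ENNReal.ofReal ε := by ring


lemma lemA {V' Vε : Set V} (hV' : MeasurableSet V') {τ : V → W} (hτ : Measurable τ)
    (η₁ η₂ : Measure V) [IsProbabilityMeasure η₁] [IsProbabilityMeasure η₂]
    (hfull₁ : η₁ V' = 1) (hfull₂ : η₂ V' = 1)
    {ε R : ℝ} (hR : 1 ≤ R) (hVm : MeasurableSet Vε) (hsub : Vε ⊆ V')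
    (hsmall₁ : η₁ (V' \ Vε) < ENNReal.ofReal ε) (hsmall₂ : η₂ (V' \ Vε) < ENNReal.ofReal ε)
    (hlip : ∀ x ∈ Vε, ∀ y ∈ Vε, dist (τ x) (τ y) ≤ R * dist x y)
    {δ : ℝ≥0∞} (hδ : levyProkhorovEDist η₁ η₂ < δ) :
    levyProkhorovEDist (η₁.map τ) (η₂.map τ) ≤ ENNReal.ofReal R * δ + 2 * ENNReal.ofReal ε := by
  refine levyProkhorovEDist_le_of_forall _ _ _ (fun c B hc hctop hB => ?_)
  have hcne : c ≠ ∞ := hctop.ne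
  have hRδc : ENNReal.ofReal R * δ ≤ c := le_trans (self_le_add_right _ _) hc.le
  have hRc : R * δ.toReal ≤ c.toReal := by
    calc R * δ.toReal = (ENNReal.ofReal R * δ).toReal := by
          rw [ENNReal.toReal_mul, ENNReal.toReal_ofReal (by linarith)]
      _ ≤ c.toReal := ENNReal.toReal_mono hcne hRδc
  have hδle : δ ≤ ENNReal.ofReal R * δ := by
    nth_rewrite 1 [← one_mul δ]
    gcongr
    rw [← ENNReal.ofReal_one]
    exact ENNReal.ofReal_le_ofReal hR
  have hδc : δ + 2 * ENNReal.ofReal ε ≤ c :=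
    le_trans (add_le_add_left hδle _) hc.le
  have hδ' : levyProkhorovEDist η₂ η₁ < δ := levyProkhorovEDist_comm η₁ η₂ ▸ hδ
  constructor
  · calc η₁.map τ B
        ≤ η₂.map τ (thickening (R * δ.toReal) B) + δ + 2 * ENNReal.ofReal ε :=
          keyA hV' hτ η₁ η₂ hfull₁ hfull₂ hR hVm hsub hsmall₁ hsmall₂ hlip hδ hB
      _ ≤ η₂.map τ (thickening c.toReal B) + δ + 2 * ENNReal.ofReal ε := by
          have : thickening (R * δ.toReal) B ⊆ thickening c.toReal B := thickening_mono hRc B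
          gcongr
      _ ≤ η₂.map τ (thickening c.toReal B) + c := by
          rw [add_assoc]
          exact add_le_add_right hδc _
  · calc η₂.map τ B
        ≤ η₁.map τ (thickening (R * δ.toReal) B) + δ + 2 * ENNReal.ofReal ε :=
          keyA hV' hτ η₂ η₁ hfull₂ hfull₁ hR hVm hsub hsmall₂ hsmall₁ hlip hδ' hB
      _ ≤ η₁.map τ (thickening c.toReal B) + δ + 2 * ENNReal.ofReal ε := by
          have : thickening (R * δ.toReal) B ⊆ thickening c.toReal B := thickening_mono hRc B
          gcongr
      _ ≤ η₁.map τ (thickening c.toReal B) + c := by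
          rw [add_assoc]
          exact add_le_add_right hδc _

lemma lemB [StandardBorelSpace V] [MeasurableSpace.CountablySeparated W]
    {V' Vε : Set V} (hV' : MeasurableSet V') {τ : V → W} (hτ : Measurable τ)
    (η₁ η₂ : Measure V) [IsProbabilityMeasure η₁] [IsProbabilityMeasure η₂]
    (hfull₁ : η₁ V' = 1) (hfull₂ : η₂ V' = 1)
    {ε R : ℝ} (hR : 1 ≤ R) (hVm : MeasurableSet Vε) (hsub : Vε ⊆ V')
    (hsmall₁ : η₁ (V' \ Vε) < ENNReal.ofReal ε) (hsmall₂ : η₂ (V' \ Vε) < ENNReal.ofReal ε)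
    (hlow : ∀ x ∈ Vε, ∀ y ∈ Vε, dist x y ≤ R * dist (τ x) (τ y))
    {δ : ℝ≥0∞} (hδ0 : 0 < δ) (hδtop : δ ≠ ∞)
    (hδ : levyProkhorovEDist (η₁.map τ) (η₂.map τ) < δ) :
    levyProkhorovEDist η₁ η₂ ≤ ENNReal.ofReal R * δ + 2 * ENNReal.ofReal ε := by
  refine levyProkhorovEDist_le_of_forall _ _ _ (fun c B hc hctop hB => ?_)
  have hcne : c ≠ ∞ := hctop.ne
  have hRδc : ENNReal.ofReal R * δ ≤ c := le_trans (self_le_add_right _ _) hc.le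
  have hRc : R * δ.toReal ≤ c.toReal := by
    calc R * δ.toReal = (ENNReal.ofReal R * δ).toReal := by
          rw [ENNReal.toReal_mul, ENNReal.toReal_ofReal (by linarith)]
      _ ≤ c.toReal := ENNReal.toReal_mono hcne hRδc
  have hδle : δ ≤ ENNReal.ofReal R * δ := by
    nth_rewrite 1 [← one_mul δ]
    gcongr
    rw [← ENNReal.ofReal_one]
    exact ENNReal.ofReal_le_ofReal hR
  have hδc : δ + 2 * ENNReal.ofReal ε ≤ c :=
    le_trans (add_le_add_left hδle _) hc.le
  have hδ' : levyProkhorovEDist (η₂.map τ) (η₁.map τ) < δ :=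
    levyProkhorovEDist_comm (η₁.map τ) (η₂.map τ) ▸ hδ
  constructor
  · calc η₁ B
        ≤ η₂ (thickening (R * δ.toReal) B) + δ + 2 * ENNReal.ofReal ε :=
          keyB hV' hτ η₁ η₂ hfull₁ hfull₂ hR hVm hsub hsmall₁ hsmall₂ hlow hδ0 hδtop hδ hB
      _ ≤ η₂ (thickening c.toReal B) + δ + 2 * ENNReal.ofReal ε := by
          have : thickening (R * δ.toReal) B ⊆ thickening c.toReal B := thickening_mono hRc B
          gcongr
      _ ≤ η₂ (thickening c.toReal B) + c := by
          rw [add_assoc]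
          exact add_le_add_right hδc _
  · calc η₂ B
        ≤ η₁ (thickening (R * δ.toReal) B) + δ + 2 * ENNReal.ofReal ε :=
          keyB hV' hτ η₂ η₁ hfull₂ hfull₁ hR hVm hsub hsmall₂ hsmall₁ hlow hδ0 hδtop hδ' hB
      _ ≤ η₁ (thickening c.toReal B) + δ + 2 * ENNReal.ofReal ε := by
          have : thickening (R * δ.toReal) B ⊆ thickening c.toReal B := thickening_mono hRc B
          gcongr
      _ ≤ η₁ (thickening c.toReal B) + c := by
          rw [add_assoc]
          exact add_le_add_right hδc _

end Stmt1Aux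
open MeasureTheory Topology Metric

/-- Let `V, W` be complete separable metric spaces, `V' ⊆ V` Borel, `𝔑` a set of
Borel probability measures with `η(V') = 1` for all `η ∈ 𝔑`, and `τ` a Borel map which, for every
`ε > 0`, is `R(ε)`-bi-Lipschitz outside a set of measure `< ε` uniformly over `𝔑`. Then the
pushforward map `τ_* : 𝔑 → 𝔐₁(W)` is injective and a homeomorphism onto its image
(for the weak topologies). -/
theorem stmt1 {V W : Type*}
    [MetricSpace V] [CompleteSpace V] [TopologicalSpace.SeparableSpace V]
    [MeasurableSpace V] [BorelSpace V]
    [MetricSpace W] [CompleteSpace W] [TopologicalSpace.SeparableSpace W]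
    [MeasurableSpace W] [BorelSpace W]
    {V' : Set V} (hV' : MeasurableSet V')
    (𝔑 : Set (ProbabilityMeasure V))
    (hfull : ∀ η ∈ 𝔑, (η : Measure V) V' = 1)
    (τ : V → W) (hτ : Measurable τ)
    (h : ∀ ε > (0 : ℝ), ∃ R : ℝ, 1 ≤ R ∧ ∃ Vε : Set V, MeasurableSet Vε ∧ Vε ⊆ V' ∧
      (∀ η ∈ 𝔑, (η : Measure V) (V' \ Vε) < ENNReal.ofReal ε) ∧
      ∀ x ∈ Vε, ∀ y ∈ Vε, x ≠ y →
        R⁻¹ ≤ dist (τ x) (τ y) / dist x y ∧ dist (τ x) (τ y) / dist x y ≤ R) :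
    Set.InjOn (fun η : ProbabilityMeasure V => η.map hτ.aemeasurable) 𝔑 ∧
      Topology.IsEmbedding
        (fun η : ↥𝔑 => (η : ProbabilityMeasure V).map hτ.aemeasurable) := by
  classical
  haveI : SecondCountableTopology V := UniformSpace.secondCountable_of_separable V
  haveI : SecondCountableTopology W := UniformSpace.secondCountable_of_separable W
  -- Quantitative Lévy-Prokhorov estimates in both directions.
  have h' : ∀ ε > (0:ℝ), ∃ R : ℝ, 1 ≤ R ∧ ∀ η₁ ∈ 𝔑, ∀ η₂ ∈ 𝔑,
      (∀ δ : ℝ≥0∞, δ ≠ ∞ → levyProkhorovEDist (η₁ : Measure V) (η₂ : Measure V) < δ →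
        levyProkhorovEDist ((η₁ : Measure V).map τ) ((η₂ : Measure V).map τ)
          ≤ ENNReal.ofReal R * δ + 2 * ENNReal.ofReal ε) ∧
      (∀ δ : ℝ≥0∞, 0 < δ → δ ≠ ∞ →
        levyProkhorovEDist ((η₁ : Measure V).map τ) ((η₂ : Measure V).map τ) < δ →
        levyProkhorovEDist (η₁ : Measure V) (η₂ : Measure V)
          ≤ ENNReal.ofReal R * δ + 2 * ENNReal.ofReal ε) := by
    intro ε hε
    obtain ⟨R, hR, Vε, hVm, hsub, hsmall, hbilip⟩ := h ε hε
    have hR0 : (0:ℝ) < R := lt_of_lt_of_le one_pos hR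
    have hlip : ∀ x ∈ Vε, ∀ y ∈ Vε, dist (τ x) (τ y) ≤ R * dist x y := by
      intro x hx y hy
      by_cases hxy : x = y
      · subst hxy; simp
      · have h2 := (hbilip x hx y hy hxy).2
        have hd : 0 < dist x y := dist_pos.2 hxy
        calc dist (τ x) (τ y) = dist (τ x) (τ y) / dist x y * dist x y := by field_simp
          _ ≤ R * dist x y := mul_le_mul_of_nonneg_right h2 dist_nonneg
    have hlow : ∀ x ∈ Vε, ∀ y ∈ Vε, dist x y ≤ R * dist (τ x) (τ y) := by
      intro x hx y hy
      by_cases hxy : x = y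
      · subst hxy; simp [mul_nonneg hR0.le dist_nonneg]
      · have h1 := (hbilip x hx y hy hxy).1
        have hd : 0 < dist x y := dist_pos.2 hxy
        have h1' : R⁻¹ * dist x y ≤ dist (τ x) (τ y) := by
          have := mul_le_mul_of_nonneg_right h1 hd.le
          calc R⁻¹ * dist x y ≤ dist (τ x) (τ y) / dist x y * dist x y := this
            _ = dist (τ x) (τ y) := by field_simp
        calc dist x y = R * (R⁻¹ * dist x y) := by field_simp
          _ ≤ R * dist (τ x) (τ y) := mul_le_mul_of_nonneg_left h1' hR0.le
    refine ⟨R, hR, fun η₁ h₁ η₂ h₂ => ⟨?_, ?_⟩⟩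
    · intro δ hδtop hδ
      exact Stmt1Aux.lemA hV' hτ _ _ (hfull η₁ h₁) (hfull η₂ h₂) hR hVm hsub
        (hsmall η₁ h₁) (hsmall η₂ h₂) hlip hδ
    · intro δ hδ0 hδtop hδ
      exact Stmt1Aux.lemB hV' hτ _ _ (hfull η₁ h₁) (hfull η₂ h₂) hR hVm hsub
        (hsmall η₁ h₁) (hsmall η₂ h₂) hlow hδ0 hδtop hδ
  -- Set up the Lévy-Prokhorov picture.
  let eV : ProbabilityMeasure V ≃ₜ LevyProkhorov (ProbabilityMeasure V) :=
    MeasureTheory.LevyProkhorov.probabilityMeasureHomeomorph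
  let eW : ProbabilityMeasure W ≃ₜ LevyProkhorov (ProbabilityMeasure W) :=
    MeasureTheory.LevyProkhorov.probabilityMeasureHomeomorph
  set 𝔑' : Set (LevyProkhorov (ProbabilityMeasure V)) := ⇑eV '' 𝔑 with h𝔑'
  let g' : ↥𝔑' → LevyProkhorov (ProbabilityMeasure W) :=
    fun μ => eW (((eV.symm (↑μ) : ProbabilityMeasure V)).map hτ.aemeasurable)
  have hmem : ∀ μ : ↥𝔑', (eV.symm (↑μ) : ProbabilityMeasure V) ∈ 𝔑 := by
    rintro ⟨μ, η, hη, rfl⟩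
    simpa using hη
  have distV_eq : ∀ a b : ↥𝔑', dist a b =
      (levyProkhorovEDist ((eV.symm (↑a) : ProbabilityMeasure V) : Measure V)
        ((eV.symm (↑b) : ProbabilityMeasure V) : Measure V)).toReal := fun a b => rfl
  have distW_eq : ∀ a b : ↥𝔑', dist (g' a) (g' b) =
      (levyProkhorovEDist (((eV.symm (↑a) : ProbabilityMeasure V) : Measure V).map τ)
        (((eV.symm (↑b) : ProbabilityMeasure V) : Measure V).map τ)).toReal := fun a b => rfl
  have hg' : IsUniformEmbedding g' := by
    rw [Metric.isUniformEmbedding_iff']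
    constructor
    · intro ε₀ hε₀
      obtain ⟨R, hR, hkey⟩ := h' (ε₀/8) (by positivity)
      have hR0 : (0:ℝ) < R := lt_of_lt_of_le one_pos hR
      refine ⟨ε₀/(2*R), by positivity, ?_⟩
      intro a b hab
      have hne : levyProkhorovEDist ((eV.symm (↑a) : ProbabilityMeasure V) : Measure V)
          ((eV.symm (↑b) : ProbabilityMeasure V) : Measure V) ≠ ∞ :=
        levyProkhorovEDist_ne_top _ _
      rw [distV_eq] at hab
      have hlt := (ENNReal.lt_ofReal_iff_toReal_lt hne).2 hab
      have hmap := (hkey _ (hmem a) _ (hmem b)).1 (ENNReal.ofReal (ε₀/(2*R)))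
        ENNReal.ofReal_ne_top hlt
      have hbound : ENNReal.ofReal R * ENNReal.ofReal (ε₀/(2*R)) + 2 * ENNReal.ofReal (ε₀/8)
          ≤ ENNReal.ofReal (3*ε₀/4) := by
        rw [← ENNReal.ofReal_mul hR0.le, ← ENNReal.ofReal_ofNat 2,
          ← ENNReal.ofReal_mul (by norm_num), ← ENNReal.ofReal_add (by positivity) (by positivity)]
        apply ENNReal.ofReal_le_ofReal
        rw [show R * (ε₀/(2*R)) = ε₀/2 by field_simp]
        linarith
      rw [distW_eq]
      have := ENNReal.toReal_le_of_le_ofReal (by positivity) (le_trans hmap hbound)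
      linarith
    · intro δ₀ hδ₀
      obtain ⟨R, hR, hkey⟩ := h' (δ₀/8) (by positivity)
      have hR0 : (0:ℝ) < R := lt_of_lt_of_le one_pos hR
      refine ⟨δ₀/(2*R), by positivity, ?_⟩
      intro a b hab
      have hne : levyProkhorovEDist (((eV.symm (↑a) : ProbabilityMeasure V) : Measure V).map τ)
          (((eV.symm (↑b) : ProbabilityMeasure V) : Measure V).map τ) ≠ ∞ := by
        haveI : IsProbabilityMeasure (((eV.symm (↑a) : ProbabilityMeasure V) : Measure V).map τ) :=
          Measure.isProbabilityMeasure_map hτ.aemeasurable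
        haveI : IsProbabilityMeasure (((eV.symm (↑b) : ProbabilityMeasure V) : Measure V).map τ) :=
          Measure.isProbabilityMeasure_map hτ.aemeasurable
        exact levyProkhorovEDist_ne_top _ _
      rw [distW_eq] at hab
      have hlt := (ENNReal.lt_ofReal_iff_toReal_lt hne).2 hab
      have hmap := (hkey _ (hmem a) _ (hmem b)).2 (ENNReal.ofReal (δ₀/(2*R)))
        (ENNReal.ofReal_pos.2 (by positivity)) ENNReal.ofReal_ne_top hlt
      have hbound : ENNReal.ofReal R * ENNReal.ofReal (δ₀/(2*R)) + 2 * ENNReal.ofReal (δ₀/8)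
          ≤ ENNReal.ofReal (3*δ₀/4) := by
        rw [← ENNReal.ofReal_mul hR0.le, ← ENNReal.ofReal_ofNat 2,
          ← ENNReal.ofReal_mul (by norm_num), ← ENNReal.ofReal_add (by positivity) (by positivity)]
        apply ENNReal.ofReal_le_ofReal
        rw [show R * (δ₀/(2*R)) = δ₀/2 by field_simp]
        linarith
      rw [distV_eq]
      have := ENNReal.toReal_le_of_le_ofReal (by positivity) (le_trans hmap hbound)
      linarith
  -- Assemble the embedding.
  let e' : ↥𝔑 ≃ₜ ↥𝔑' := eV.image 𝔑
  have hcomp : (fun η : ↥𝔑 => (η : ProbabilityMeasure V).map hτ.aemeasurable)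
      = (eW.symm ∘ g') ∘ e' := by
    funext η
    show (η : ProbabilityMeasure V).map hτ.aemeasurable
      = eW.symm (eW (((eV.symm (↑(e' η)) : ProbabilityMeasure V)).map hτ.aemeasurable))
    rw [Homeomorph.symm_apply_apply]
    have : (eV.symm (↑(e' η)) : ProbabilityMeasure V) = (η : ProbabilityMeasure V) := by
      show eV.symm (eV (η : ProbabilityMeasure V)) = _
      rw [Homeomorph.symm_apply_apply]
    rw [this]
  have hEmb : Topology.IsEmbedding
      (fun η : ↥𝔑 => (η : ProbabilityMeasure V).map hτ.aemeasurable) := by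
    rw [hcomp]
    exact ((eW.symm.isEmbedding.comp hg'.isEmbedding).comp e'.isEmbedding)
  refine ⟨?_, hEmb⟩
  intro η₁ h₁ η₂ h₂ heq
  have : (⟨η₁, h₁⟩ : ↥𝔑) = ⟨η₂, h₂⟩ := hEmb.injective heq
  exact congrArg Subtype.val this
end

section
/- Let M be a complete separable metric space, let 𝔑, 𝔑̃ be compact subsets of 𝔐₁(ℂ^ℕ), and let F : M → C(𝔑, 𝔑̃) be a map into the space of continuous maps from 𝔑 to 𝔑̃ with the uniform (Chebyshev) metric over the Lévy–Prokhorov metric. If for every l ∈ ℕ the map m ↦ π_l ∘ F(m) (assigning to m the l-dimensional marginal projection of F(m)) is uniformly continuous, then F itself is uniformly continuous. -/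
open MeasureTheory Topology Metric

attribute [local instance] PiCountable.metricSpace

set_option maxHeartbeats 1000000

lemma mydist_eq (x y : ℕ → ℂ) : dist x y = ∑' i : ℕ, min ((1/2:ℝ)^i) (dist (x i) (y i)) := by
  rw [PiCountable.dist_eq_tsum]; simp [one_div]

lemma mysummable (x y : ℕ → ℂ) : Summable (fun i : ℕ => min ((1/2:ℝ)^i) (dist (x i) (y i))) :=
  Summable.of_nonneg_of_le (fun i => le_min (by positivity) dist_nonneg)
    (fun i => min_le_left _ _) summable_geometric_two

lemma mydist_le (l : ℕ) (x y : ℕ → ℂ) :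
    dist x y ≤ l * dist (fun i : Fin l => x i) (fun i : Fin l => y i) + 2 * (1/2:ℝ)^l := by
  set D := dist (fun i : Fin l => x i) (fun i : Fin l => y i) with hD
  have hsum := mysummable x y
  rw [mydist_eq]
  rw [← Summable.sum_add_tsum_nat_add l hsum]
  have h1 : ∑ i ∈ Finset.range l, min ((1/2:ℝ)^i) (dist (x i) (y i)) ≤ l * D := by
    calc ∑ i ∈ Finset.range l, min ((1/2:ℝ)^i) (dist (x i) (y i))
        ≤ ∑ _i ∈ Finset.range l, D := by
          refine Finset.sum_le_sum fun i hi => ?_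
          refine (min_le_right _ _).trans ?_
          have := dist_le_pi_dist (fun j : Fin l => x j) (fun j : Fin l => y j)
            ⟨i, Finset.mem_range.mp hi⟩
          exact this
      _ = l * D := by simp [mul_comm]
  have h2 : ∑' i : ℕ, min ((1/2:ℝ)^(i+l)) (dist (x (i+l)) (y (i+l))) ≤ 2 * (1/2:ℝ)^l := by
    calc ∑' i : ℕ, min ((1/2:ℝ)^(i+l)) (dist (x (i+l)) (y (i+l)))
        ≤ ∑' i : ℕ, ((1/2:ℝ)^(i+l)) := by
          refine Summable.tsum_le_tsum (fun i => min_le_left _ _) ((summable_nat_add_iff l).mpr hsum) ?_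
          exact (summable_nat_add_iff l).mpr summable_geometric_two
      _ = 2 * (1/2:ℝ)^l := by
          simp_rw [pow_add]
          rw [tsum_mul_right, tsum_geometric_two]
  exact add_le_add h1 h2

noncomputable abbrev myproj (l : ℕ) : (ℕ → ℂ) → (Fin l → ℂ) := fun t (i : Fin l) => t i

lemma myproj_meas (l : ℕ) : Measurable (myproj l) :=
  measurable_pi_lambda _ fun _ => measurable_pi_apply _

lemma aux_meas (l : ℕ) (μ ν : Measure (ℕ → ℂ)) {r ε : ℝ} (hr : 0 < r)
    (hGE : (l+1) * r + 2 * (1/2:ℝ)^l ≤ ε)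
    (hmble : ∀ A : Set (Fin l → ℂ), MeasurableSet A →
      μ.map (myproj l) A ≤ ν.map (myproj l) (thickening r A) + ENNReal.ofReal r)
    (B : Set (ℕ → ℂ)) (hB : MeasurableSet B) :
    μ B ≤ ν (thickening ε B) + ENNReal.ofReal ε := by
  set A := closure (myproj l '' B) with hA
  have hAm : MeasurableSet A := isClosed_closure.measurableSet
  have h1 : μ B ≤ μ.map (myproj l) A := by
    rw [Measure.map_apply (myproj_meas l) hAm]
    exact measure_mono ((Set.subset_preimage_image _ _).trans
      (Set.preimage_mono subset_closure))
  have h3 : ν.map (myproj l) (thickening r A) = ν (myproj l ⁻¹' thickening r A) :=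
    Measure.map_apply (myproj_meas l) isOpen_thickening.measurableSet
  have h4 : myproj l ⁻¹' thickening r A ⊆ thickening ε B := by
    intro y hy
    rw [Set.mem_preimage, mem_thickening_iff] at hy
    obtain ⟨z, hz, hdz⟩ := hy
    obtain ⟨w, hw, hdw⟩ := Metric.mem_closure_iff.mp hz (r - dist (myproj l y) z)
      (by linarith)
    obtain ⟨b, hb, rfl⟩ := hw
    have hby : dist (myproj l y) (myproj l b) < r :=
      (dist_triangle (myproj l y) z (myproj l b)).trans_lt (by linarith)
    have hyb : dist y b < ε := by
      have := mydist_le l y b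
      have hl : (l : ℝ) * dist (myproj l y) (myproj l b) ≤ l * r :=
        mul_le_mul_of_nonneg_left hby.le (Nat.cast_nonneg l)
      nlinarith [hby, this]
    exact mem_thickening_iff.mpr ⟨b, hb, hyb⟩
  have hre : r ≤ ε := by nlinarith [pow_pos (by norm_num : (0:ℝ) < 1/2) l, (Nat.cast_nonneg l : (0:ℝ) ≤ l)]
  calc μ B ≤ μ.map (myproj l) A := h1
    _ ≤ ν.map (myproj l) (thickening r A) + ENNReal.ofReal r := hmble A hAm
    _ = ν (myproj l ⁻¹' thickening r A) + ENNReal.ofReal r := by rw [h3]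
    _ ≤ ν (thickening ε B) + ENNReal.ofReal ε :=
        add_le_add (measure_mono h4) (ENNReal.ofReal_le_ofReal hre)

lemma LP_le (l : ℕ) (μ ν : Measure (ℕ → ℂ)) {r : ℝ} (hr : 0 < r)
    (h : levyProkhorovEDist (μ.map (myproj l)) (ν.map (myproj l)) < ENNReal.ofReal r) :
    levyProkhorovEDist μ ν ≤ ENNReal.ofReal ((l+1) * r + 2 * (1/2:ℝ)^l) := by
  set D := (l+1) * r + 2 * (1/2:ℝ)^l with hDdef
  apply levyProkhorovEDist_le_of_forall μ ν (ENNReal.ofReal D)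
  intro ε B hlt hfin hBm
  have hεt : D < ε.toReal := by
    have hD0 : 0 ≤ D := by positivity
    exact (ENNReal.ofReal_lt_iff_lt_toReal hD0 hfin.ne).mp hlt
  have hofε : ENNReal.ofReal ε.toReal = ε := ENNReal.ofReal_toReal hfin.ne
  have hleft := fun (A : Set (Fin l → ℂ)) (hAm : MeasurableSet A) =>
    left_measure_le_of_levyProkhorovEDist_lt h (B_mble := hAm)
  have hright := fun (A : Set (Fin l → ℂ)) (hAm : MeasurableSet A) =>
    right_measure_le_of_levyProkhorovEDist_lt h (B_mble := hAm)
  rw [ENNReal.toReal_ofReal hr.le] at hleft hright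
  constructor
  · have := aux_meas l μ ν hr (ε := ε.toReal) hεt.le hleft B hBm
    rwa [hofε] at this
  · have := aux_meas l ν μ hr (ε := ε.toReal) hεt.le hright B hBm
    rwa [hofε] at this


/-- Let `M` be a complete separable metric space, `𝔑, 𝔑̃ ⊆ 𝔐₁(ℂ^ℕ)` compact,
and `F : M → C(𝔑, 𝔑̃)` a map into continuous maps `𝔑 → 𝔑̃` (uniform metric over the
Lévy–Prokhorov metric). If for every `l` the map `m ↦ π_l ∘ F(m)` is uniformly continuous, then
`F` is uniformly continuous. -/
theorem stmt4 {M : Type*} [MetricSpace M] [CompleteSpace M]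
    [TopologicalSpace.SeparableSpace M]
    {𝔑 𝔑' : Set (ProbabilityMeasure (ℕ → ℂ))} (h𝔑 : IsCompact 𝔑) (h𝔑' : IsCompact 𝔑')
    (F : M → ↥𝔑 → ProbabilityMeasure (ℕ → ℂ))
    (hcont : ∀ m, Continuous (F m)) (hrange : ∀ m η, F m η ∈ 𝔑')
    (hfd : ∀ l : ℕ, ∀ ε > (0 : ℝ), ∃ δ > (0 : ℝ), ∀ m m' : M, dist m m' < δ →
      ∀ η : ↥𝔑, levyProkhorovDist
          ((F m η : Measure (ℕ → ℂ)).map (fun t (i : Fin l) => t i))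
          ((F m' η : Measure (ℕ → ℂ)).map (fun t (i : Fin l) => t i)) < ε) :
    ∀ ε > (0 : ℝ), ∃ δ > (0 : ℝ), ∀ m m' : M, dist m m' < δ →
      ∀ η : ↥𝔑,
        levyProkhorovDist (F m η : Measure (ℕ → ℂ)) (F m' η : Measure (ℕ → ℂ)) < ε := by
  intro ε hε
  obtain ⟨l, hl⟩ : ∃ l : ℕ, 2 * (1/2:ℝ)^l < ε/2 := by
    obtain ⟨l, hl⟩ := exists_pow_lt_of_lt_one (show (0:ℝ) < ε/4 by linarith)
      (show (1/2:ℝ) < 1 by norm_num)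
    exact ⟨l, by linarith⟩
  set r := (ε/2) / (l+1) with hrdef
  have hr : 0 < r := by positivity
  obtain ⟨δ, hδpos, hδ⟩ := hfd l r hr
  refine ⟨δ, hδpos, fun m m' hmm' η => ?_⟩
  have h1 := hδ m m' hmm' η
  haveI : IsProbabilityMeasure ((F m η : Measure (ℕ → ℂ)).map (myproj l)) :=
    Measure.isProbabilityMeasure_map (myproj_meas l).aemeasurable
  haveI : IsProbabilityMeasure ((F m' η : Measure (ℕ → ℂ)).map (myproj l)) :=
    Measure.isProbabilityMeasure_map (myproj_meas l).aemeasurable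
  have h2 : levyProkhorovEDist ((F m η : Measure (ℕ → ℂ)).map (myproj l))
      ((F m' η : Measure (ℕ → ℂ)).map (myproj l)) < ENNReal.ofReal r := by
    rw [ENNReal.lt_ofReal_iff_toReal_lt (levyProkhorovEDist_ne_top _ _)]
    exact h1
  have h3 := LP_le l _ _ hr h2
  have hD : (l+1) * r + 2 * (1/2:ℝ)^l < ε := by
    have hne : (l:ℝ) + 1 ≠ 0 := by positivity
    have : ((l:ℝ)+1) * r = ε/2 := by rw [hrdef]; field_simp
    linarith
  calc levyProkhorovDist (F m η : Measure (ℕ → ℂ)) (F m' η : Measure (ℕ → ℂ))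
      = (levyProkhorovEDist (F m η : Measure (ℕ → ℂ)) (F m' η : Measure (ℕ → ℂ))).toReal := rfl
    _ ≤ (ENNReal.ofReal ((l+1) * r + 2 * (1/2:ℝ)^l)).toReal :=
        ENNReal.toReal_mono ENNReal.ofReal_ne_top h3
    _ = (l+1) * r + 2 * (1/2:ℝ)^l := ENNReal.toReal_ofReal (by positivity)
    _ < ε := hD
end

section
/- Let S₀ ⊆ ℕ and let 𝔑 ⊆ 𝔐₁(ℂ^ℕ) be a compact set such that for every n ∈ ℕ and every δ > 0, ε > 0 there exists s₀ ∈ S₀ with sup_{η∈𝔑} η({t ∈ ℂ^ℕ : |t(n) − t(s₀)| > δ}) < ε. Then the pushforward under the projection ℂ^ℕ → ℂ^{S₀} restricted to 𝔑 is injective and a homeomorphism of 𝔑 onto its image. -/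
open MeasureTheory Topology Metric Filter
open scoped NNReal ENNReal

/-- Let `S₀ ⊆ ℕ` and let `𝔑 ⊆ 𝔐₁(ℂ^ℕ)` be compact such that for every
coordinate `n` and all `δ, ε > 0` there is `s₀ ∈ S₀` with
`η({t : |t(n) − t(s₀)| > δ}) < ε` for all `η ∈ 𝔑`. Then the pushforward under the projection
`ℂ^ℕ → ℂ^{S₀}` restricted to `𝔑` is injective and a homeomorphism of `𝔑` onto its image. -/
theorem stmt8 (S₀ : Set ℕ) (𝔑 : Set (ProbabilityMeasure (ℕ → ℂ))) (h𝔑 : IsCompact 𝔑)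
    (hproj : Measurable fun (t : ℕ → ℂ) (s : S₀) => t s)
    (hcond : ∀ n : ℕ, ∀ δ > (0 : ℝ), ∀ ε > (0 : ℝ), ∃ s₀ ∈ S₀, ∀ η ∈ 𝔑,
      ((η {t : ℕ → ℂ | δ < ‖t n - t s₀‖} : ℝ≥0) : ℝ) < ε) :
    Set.InjOn (fun η : ProbabilityMeasure (ℕ → ℂ) => η.map hproj.aemeasurable) 𝔑 ∧
      Topology.IsEmbedding
        (fun η : ↥𝔑 => (η : ProbabilityMeasure (ℕ → ℂ)).map hproj.aemeasurable) := by
  classical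
  set π : (ℕ → ℂ) → (S₀ → ℂ) := fun t s => t s with hπdef
  -- choose approximating coordinates
  have hchoice : ∀ n k : ℕ, ∃ s₀ ∈ S₀, ∀ η ∈ 𝔑,
      ((η {t : ℕ → ℂ | ((1:ℝ)/2)^k < ‖t n - t s₀‖} : ℝ≥0) : ℝ) < ((1:ℝ)/2)^k :=
    fun n k => hcond n (((1:ℝ)/2)^k) (by positivity) (((1:ℝ)/2)^k) (by positivity)
  choose s hsS hs using hchoice
  -- a.e. convergence under each measure of 𝔑
  have key : ∀ μ : ProbabilityMeasure (ℕ → ℂ), μ ∈ 𝔑 → ∀ n : ℕ,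
      ∀ᵐ t ∂(μ : Measure (ℕ → ℂ)),
        Tendsto (fun k => t (s n k)) atTop (𝓝 (t n)) := by
    intro μ hμ n
    set A : ℕ → Set (ℕ → ℂ) :=
      fun k => {t | ((1:ℝ)/2)^k < ‖t n - t (s n k)‖} with hA
    have hsum : (∑' k, (μ : Measure (ℕ → ℂ)) (A k)) ≠ ∞ := by
      have hle : ∀ k, (μ : Measure (ℕ → ℂ)) (A k) ≤ ENNReal.ofReal (((1:ℝ)/2)^k) := by
        intro k
        have h1 : ((μ (A k) : ℝ≥0) : ℝ) ≤ ((1:ℝ)/2)^k := (hs n k μ hμ).le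
        have h2 : (μ : Measure (ℕ → ℂ)) (A k) = ((μ (A k) : ℝ≥0) : ℝ≥0∞) :=
          (μ.ennreal_coeFn_eq_coeFn_toMeasure (A k)).symm
        rw [h2, ENNReal.ofReal]
        exact ENNReal.coe_le_coe.2 ((Real.le_toNNReal_iff_coe_le (by positivity)).2 h1)
      have hgeom : (∑' k, ENNReal.ofReal (((1:ℝ)/2)^k)) ≠ ∞ := by
        have : Summable (fun k => ((1:ℝ)/2)^k) := summable_geometric_of_lt_one (by norm_num) (by norm_num)
        rw [← ENNReal.ofReal_tsum_of_nonneg (fun k => by positivity) this]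
        exact ENNReal.ofReal_ne_top
      exact ne_top_of_le_ne_top hgeom (ENNReal.tsum_le_tsum hle)
    have hae := MeasureTheory.ae_eventually_notMem hsum
    filter_upwards [hae] with t ht
    have htend : Tendsto (fun k => dist (t (s n k)) (t n)) atTop (𝓝 0) := by
      have h0 : Tendsto (fun k : ℕ => ((1:ℝ)/2)^k) atTop (𝓝 0) :=
        tendsto_pow_atTop_nhds_zero_of_lt_one (by norm_num) (by norm_num)
      refine squeeze_zero' ?_ ?_ h0
      · exact Eventually.of_forall fun k => dist_nonneg
      · filter_upwards [ht] with k hk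
        have : ¬ ((1:ℝ)/2)^k < ‖t n - t (s n k)‖ := hk
        rw [dist_comm, Complex.dist_eq]
        exact not_lt.mp this
    exact tendsto_iff_dist_tendsto_zero.mpr htend
  -- Injectivity on 𝔑
  have hinj : Set.InjOn (fun η : ProbabilityMeasure (ℕ → ℂ) => η.map hproj.aemeasurable) 𝔑 := by
    intro μ₁ h₁ μ₂ h₂ heq
    have hmeq : Measure.map π (μ₁ : Measure (ℕ → ℂ)) = Measure.map π (μ₂ : Measure (ℕ → ℂ)) := by
      have := congrArg ProbabilityMeasure.toMeasure heq
      simpa [ProbabilityMeasure.toMeasure_map] using this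
    set ν : Measure (S₀ → ℂ) :=
      Measure.map π (μ₁ : Measure (ℕ → ℂ)) + Measure.map π (μ₂ : Measure (ℕ → ℂ)) with hν
    have hf_meas : ∀ n k, Measurable (fun y : S₀ → ℂ => y ⟨s n k, hsS n k⟩) :=
      fun n k => measurable_pi_apply _
    have hsetmeas : ∀ n, MeasurableSet
        {y : S₀ → ℂ | ∃ c, Tendsto (fun k => y ⟨s n k, hsS n k⟩) atTop (𝓝 c)} :=
      fun n => measurableSet_exists_tendsto (hf_meas n)
    have haemap : ∀ (μ : ProbabilityMeasure (ℕ → ℂ)), μ ∈ 𝔑 → ∀ n,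
        ∀ᵐ y ∂(Measure.map π (μ : Measure (ℕ → ℂ))),
          ∃ c, Tendsto (fun k => y ⟨s n k, hsS n k⟩) atTop (𝓝 c) := by
      intro μ hμ n
      rw [MeasureTheory.ae_map_iff hproj.aemeasurable (hsetmeas n)]
      filter_upwards [key μ hμ n] with t ht
      exact ⟨t n, ht⟩
    have haeν : ∀ n, ∀ᵐ y ∂ν, ∃ c, Tendsto (fun k => y ⟨s n k, hsS n k⟩) atTop (𝓝 c) := by
      intro n
      rw [hν, ae_add_measure_iff]
      exact ⟨haemap μ₁ h₁ n, haemap μ₂ h₂ n⟩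
    have hglim : ∀ n, ∃ g : (S₀ → ℂ) → ℂ, Measurable g ∧
        ∀ᵐ y ∂ν, Tendsto (fun k => y ⟨s n k, hsS n k⟩) atTop (𝓝 (g y)) :=
      fun n => measurable_limit_of_tendsto_metrizable_ae
        (fun k => (hf_meas n k).aemeasurable) (haeν n)
    choose g hgm hg using hglim
    set G : (S₀ → ℂ) → (ℕ → ℂ) := fun y n => g n y with hG
    have hGm : Measurable G := measurable_pi_lambda _ fun n => hgm n
    have hfix : ∀ (μ : ProbabilityMeasure (ℕ → ℂ)), μ ∈ 𝔑 →
        Measure.map π (μ : Measure (ℕ → ℂ)) ≤ ν →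
        (G ∘ π) =ᵐ[(μ : Measure (ℕ → ℂ))] id := by
      intro μ hμ hle
      have h1 : ∀ᵐ t ∂(μ : Measure (ℕ → ℂ)), ∀ n,
          Tendsto (fun k => t (s n k)) atTop (𝓝 (t n)) :=
        (MeasureTheory.ae_all_iff).2 (key μ hμ)
      have h2 : ∀ᵐ t ∂(μ : Measure (ℕ → ℂ)), ∀ n,
          Tendsto (fun k => (π t) ⟨s n k, hsS n k⟩) atTop (𝓝 (g n (π t))) := by
        rw [MeasureTheory.ae_all_iff]
        intro n
        exact MeasureTheory.ae_of_ae_map hproj.aemeasurable (ae_mono hle (hg n))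
      filter_upwards [h1, h2] with t ht1 ht2
      funext n
      exact tendsto_nhds_unique (ht2 n) (ht1 n)
    have hrec : ∀ (μ : ProbabilityMeasure (ℕ → ℂ)), μ ∈ 𝔑 →
        Measure.map π (μ : Measure (ℕ → ℂ)) ≤ ν →
        (μ : Measure (ℕ → ℂ)) = Measure.map G (Measure.map π (μ : Measure (ℕ → ℂ))) := by
      intro μ hμ hle
      rw [Measure.map_map hGm hproj, Measure.map_congr (hfix μ hμ hle), Measure.map_id]
    apply ProbabilityMeasure.toMeasure_injective
    calc (μ₁ : Measure (ℕ → ℂ))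
        = Measure.map G (Measure.map π (μ₁ : Measure (ℕ → ℂ))) :=
          hrec μ₁ h₁ (by rw [hν]; exact Measure.le_add_right le_rfl)
      _ = Measure.map G (Measure.map π (μ₂ : Measure (ℕ → ℂ))) := by rw [hmeq]
      _ = (μ₂ : Measure (ℕ → ℂ)) := (hrec μ₂ h₂ (by rw [hν]; exact Measure.le_add_left le_rfl)).symm
  refine ⟨hinj, ?_⟩
  haveI : CompactSpace ↥𝔑 := isCompact_iff_compactSpace.mp h𝔑
  have hπc : Continuous π := by
    apply continuous_pi
    intro sIdx
    exact continuous_apply _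
  have hcont : Continuous
      (fun η : ↥𝔑 => (η : ProbabilityMeasure (ℕ → ℂ)).map hproj.aemeasurable) := by
    exact (ProbabilityMeasure.continuous_map hπc).comp continuous_subtype_val
  have hinj' : Function.Injective
      (fun η : ↥𝔑 => (η : ProbabilityMeasure (ℕ → ℂ)).map hproj.aemeasurable) := by
    intro η₁ η₂ h
    exact Subtype.ext (hinj η₁.2 η₂.2 h)
  exact (hcont.isClosedEmbedding hinj').toIsEmbedding
end

section
/- Let 𝔑 be a compact subset of 𝔐₁(ℂ^ℕ), let V ⊆ ℂ^ℕ be Borel with η(V) = 1 for all η ∈ 𝔑, and fix l ∈ ℕ. Let gₙ, g : 𝔑 × V → ℂ^ℕ be Borel maps such that for every k ≤ l and every ε > 0, sup_{η∈𝔑} η({t ∈ V : |gₙ(η,t)(k) − g(η,t)(k)| > ε}) → 0 as n → ∞. Then the finite-dimensional pushforward maps converge uniformly: sup_{η∈𝔑} d_LP(π_l (gₙ)_*η, π_l g_*η) → 0, where g_*η denotes the pushforward of η under t ↦ g(η,t) and π_l is projection onto the first l coordinates. -/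
open MeasureTheory Topology Metric Filter
open scoped NNReal

/- Borel structure on the space of probability measures (weak topology). -/
noncomputable local instance : MeasurableSpace (ProbabilityMeasure (ℕ → ℂ)) := borel _

/-- If two measurable maps are uniformly close outside a set of measure at most `δ`, then the
Lévy–Prokhorov distance of the pushforwards is at most `δ`. -/
lemma lp_aux {Ω E : Type*} [MeasurableSpace Ω] [PseudoMetricSpace E] [MeasurableSpace E]
    [OpensMeasurableSpace E] (μ : Measure Ω) [IsProbabilityMeasure μ] {f h : Ω → E}
    (hf : Measurable f) (hh : Measurable h) {δ : ℝ} (δpos : 0 < δ)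
    (hm : μ {x | δ < dist (f x) (h x)} ≤ ENNReal.ofReal δ) :
    levyProkhorovDist (μ.map f) (μ.map h) ≤ δ := by
  haveI : IsProbabilityMeasure (μ.map f) := Measure.isProbabilityMeasure_map hf.aemeasurable
  haveI : IsProbabilityMeasure (μ.map h) := Measure.isProbabilityMeasure_map hh.aemeasurable
  apply levyProkhorovDist_le_of_forall_le _ _ δpos.le
  intro ε B hδε hB
  rw [Measure.map_apply hf hB,
    Measure.map_apply hh isOpen_thickening.measurableSet]
  have hsub : f ⁻¹' B ⊆ (h ⁻¹' thickening ε B) ∪ {x | δ < dist (f x) (h x)} := by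
    intro x hx
    by_cases hd : δ < dist (f x) (h x)
    · exact Or.inr hd
    · refine Or.inl (mem_thickening_iff.mpr ⟨f x, hx, ?_⟩)
      calc dist (h x) (f x) = dist (f x) (h x) := dist_comm _ _
        _ ≤ δ := not_lt.mp hd
        _ < ε := hδε
  calc μ (f ⁻¹' B) ≤ μ (h ⁻¹' thickening ε B) + μ {x | δ < dist (f x) (h x)} :=
        (measure_mono hsub).trans (measure_union_le _ _)
    _ ≤ μ (h ⁻¹' thickening ε B) + ENNReal.ofReal ε :=
        add_le_add le_rfl (hm.trans (ENNReal.ofReal_le_ofReal hδε.le))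

/-- Let `𝔑 ⊆ 𝔐₁(ℂ^ℕ)` be compact, `V` Borel of full measure, `l ∈ ℕ`. If
Borel maps `gₙ, g : 𝔑 × V → ℂ^ℕ` satisfy, for every coordinate `k < l` and `ε > 0`,
`sup_{η∈𝔑} η({t ∈ V : |gₙ(η,t)(k) − g(η,t)(k)| > ε}) → 0`, then
`sup_{η∈𝔑} d_LP(π_l (gₙ)_*η, π_l g_*η) → 0`. -/
theorem stmt10 {𝔑 : Set (ProbabilityMeasure (ℕ → ℂ))} (h𝔑 : IsCompact 𝔑)
    {V : Set (ℕ → ℂ)} (hV : MeasurableSet V)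
    (hfull : ∀ η ∈ 𝔑, (η : Measure (ℕ → ℂ)) V = 1) (l : ℕ)
    (g : ℕ → ProbabilityMeasure (ℕ → ℂ) → (ℕ → ℂ) → (ℕ → ℂ))
    (g₀ : ProbabilityMeasure (ℕ → ℂ) → (ℕ → ℂ) → (ℕ → ℂ))
    (hg : ∀ n, Measurable (Function.uncurry (g n)))
    (hg₀ : Measurable (Function.uncurry g₀))
    (hconv : ∀ k < l, ∀ ε > (0 : ℝ),
      Tendsto (fun n => ⨆ η : ↥𝔑, (((η : ProbabilityMeasure (ℕ → ℂ))
          {t ∈ V | ε < ‖g n η t k - g₀ η t k‖} : ℝ≥0) : ℝ))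
        atTop (𝓝 0)) :
    Tendsto (fun n => ⨆ η : ↥𝔑,
        levyProkhorovDist
          ((η : Measure (ℕ → ℂ)).map (fun t (i : Fin l) => g n η t i))
          ((η : Measure (ℕ → ℂ)).map (fun t (i : Fin l) => g₀ η t i)))
      atTop (𝓝 0) := by
  rcases Nat.eq_zero_or_pos l with rfl | hl
  · -- trivial case `l = 0`: the two maps coincide.
    have e : (fun n => ⨆ η : ↥𝔑,
        levyProkhorovDist
          ((η : Measure (ℕ → ℂ)).map (fun t (i : Fin 0) => g n η t i))
          ((η : Measure (ℕ → ℂ)).map (fun t (i : Fin 0) => g₀ η t i)))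
        = fun _ => ⨆ _ : ↥𝔑, (0 : ℝ) := by
      funext n
      congr 1
      funext η
      have : (fun t (i : Fin 0) => g n (↑η) t i) = (fun t (i : Fin 0) => g₀ (↑η) t i) := by
        funext t i; exact i.elim0
      rw [this, levyProkhorovDist_self]
    rw [e]
    rcases isEmpty_or_nonempty ↥𝔑 with hE | hNE
    · simpa [Real.iSup_of_isEmpty] using tendsto_const_nhds (α := ℝ) (f := atTop (α := ℕ))
    · simpa [ciSup_const] using tendsto_const_nhds (α := ℝ) (f := atTop (α := ℕ))
  · rw [Metric.tendsto_atTop]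
    intro ε εpos
    have δpos : 0 < ε / 2 := by positivity
    have δlpos : 0 < ε / 2 / l := by positivity
    have Hev : ∀ᶠ n in atTop, ∀ k ∈ Finset.range l,
        (⨆ η : ↥𝔑, (((η : ProbabilityMeasure (ℕ → ℂ))
          {t ∈ V | ε / 2 < ‖g n η t k - g₀ η t k‖} : ℝ≥0) : ℝ)) < ε / 2 / l := by
      rw [Filter.eventually_all_finset]
      exact fun k hk =>
        (hconv k (Finset.mem_range.1 hk) (ε / 2) δpos).eventually_lt_const δlpos
    rcases (Hev.and (Filter.eventually_atTop.2 ⟨0, fun _ _ => trivial⟩)).exists_forall_of_atTop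
      with ⟨N, hN⟩
    refine ⟨N, fun n hn => ?_⟩
    have key : ∀ η : ↥𝔑, levyProkhorovDist
        (((η : ProbabilityMeasure (ℕ → ℂ)) : Measure (ℕ → ℂ)).map (fun t (i : Fin l) => g n η t i))
        (((η : ProbabilityMeasure (ℕ → ℂ)) : Measure (ℕ → ℂ)).map (fun t (i : Fin l) => g₀ η t i))
        ≤ ε / 2 := by
      intro η
      set μ : Measure (ℕ → ℂ) := ((η : ProbabilityMeasure (ℕ → ℂ)) : Measure (ℕ → ℂ)) with hμ
      have hfn : Measurable (fun t (i : Fin l) => g n (↑η) t i) :=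
        measurable_pi_lambda _ fun i =>
          (measurable_pi_apply (i : ℕ)).comp ((hg n).comp measurable_prodMk_left)
      have hf0 : Measurable (fun t (i : Fin l) => g₀ (↑η) t i) :=
        measurable_pi_lambda _ fun i =>
          (measurable_pi_apply (i : ℕ)).comp (hg₀.comp measurable_prodMk_left)
      refine lp_aux μ hfn hf0 δpos ?_
      -- bound the measure of the bad set
      have hsub : {t | ε / 2 < dist ((fun t (i : Fin l) => g n (↑η) t i) t)
            ((fun t (i : Fin l) => g₀ (↑η) t i) t)}
          ⊆ (⋃ k ∈ Finset.range l,
              {t ∈ V | ε / 2 < ‖g n (↑η) t k - g₀ (↑η) t k‖}) ∪ Vᶜ := by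
        intro t ht
        by_cases htV : t ∈ V
        · have hex : ∃ i : Fin l, ε / 2 < dist (g n (↑η) t i) (g₀ (↑η) t i) := by
            by_contra hall
            push_neg at hall
            exact absurd ((dist_pi_le_iff δpos.le).2 hall) (not_le.2 ht)
          obtain ⟨i, hi⟩ := hex
          refine Or.inl (Set.mem_biUnion (Finset.mem_range.2 i.2) ⟨htV, ?_⟩)
          simpa [Complex.dist_eq] using hi
        · exact Or.inr htV
      have hVc : μ Vᶜ = 0 := by
        rw [measure_compl hV (measure_ne_top _ _), hfull _ η.2, measure_univ, tsub_self]
      have hk : ∀ k ∈ Finset.range l,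
          μ {t ∈ V | ε / 2 < ‖g n (↑η) t k - g₀ (↑η) t k‖}
            ≤ ENNReal.ofReal (ε / 2 / l) := by
        intro k hkr
        set s := {t ∈ V | ε / 2 < ‖g n (↑η) t k - g₀ (↑η) t k‖}
        have hbdd : BddAbove (Set.range fun η : ↥𝔑 => (((η : ProbabilityMeasure (ℕ → ℂ))
            {t ∈ V | ε / 2 < ‖g n η t k - g₀ η t k‖} : ℝ≥0) : ℝ)) := by
          refine ⟨1, ?_⟩
          rintro _ ⟨η', rfl⟩
          exact_mod_cast (η' : ProbabilityMeasure (ℕ → ℂ)).apply_le_one _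
        have hterm : (((η : ProbabilityMeasure (ℕ → ℂ)) s : ℝ≥0) : ℝ) ≤ ε / 2 / l :=
          ((le_ciSup hbdd η).trans_lt ((hN n hn).1 k hkr)).le
        have : μ s = (((η : ProbabilityMeasure (ℕ → ℂ)) s : ℝ≥0) : ENNReal) :=
          ((η : ProbabilityMeasure (ℕ → ℂ)).ennreal_coeFn_eq_coeFn_toMeasure s).symm
        rw [this, ← ENNReal.ofReal_coe_nnreal]
        exact ENNReal.ofReal_le_ofReal hterm
      calc μ {t | ε / 2 < dist ((fun t (i : Fin l) => g n (↑η) t i) t)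
              ((fun t (i : Fin l) => g₀ (↑η) t i) t)}
          ≤ μ (⋃ k ∈ Finset.range l,
              {t ∈ V | ε / 2 < ‖g n (↑η) t k - g₀ (↑η) t k‖}) + μ Vᶜ :=
            (measure_mono hsub).trans (measure_union_le _ _)
        _ ≤ (∑ k ∈ Finset.range l,
              μ {t ∈ V | ε / 2 < ‖g n (↑η) t k - g₀ (↑η) t k‖}) + 0 :=
            add_le_add (measure_biUnion_finset_le _ _) hVc.le
        _ ≤ (∑ _k ∈ Finset.range l, ENNReal.ofReal (ε / 2 / l)) + 0 :=
            add_le_add (Finset.sum_le_sum hk) le_rfl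
        _ = ENNReal.ofReal (ε / 2) := by
            rw [add_zero, Finset.sum_const, Finset.card_range, nsmul_eq_mul,
              ← ENNReal.ofReal_natCast, ← ENNReal.ofReal_mul (by positivity)]
            congr 1
            field_simp
    have hnonneg : (0 : ℝ) ≤ ⨆ η : ↥𝔑, levyProkhorovDist
        (((η : ProbabilityMeasure (ℕ → ℂ)) : Measure (ℕ → ℂ)).map (fun t (i : Fin l) => g n η t i))
        (((η : ProbabilityMeasure (ℕ → ℂ)) : Measure (ℕ → ℂ)).map
          (fun t (i : Fin l) => g₀ η t i)) :=
      Real.iSup_nonneg fun _ => ENNReal.toReal_nonneg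
    have hle : (⨆ η : ↥𝔑, levyProkhorovDist
        (((η : ProbabilityMeasure (ℕ → ℂ)) : Measure (ℕ → ℂ)).map (fun t (i : Fin l) => g n η t i))
        (((η : ProbabilityMeasure (ℕ → ℂ)) : Measure (ℕ → ℂ)).map
          (fun t (i : Fin l) => g₀ η t i))) ≤ ε / 2 :=
      Real.iSup_le key δpos.le
    rw [Real.dist_eq, sub_zero, abs_of_nonneg hnonneg]
    linarith
end

section
/- Let S be a nonempty set and let η be a Borel probability measure on ℂ^S (product topology, product σ-algebra side conditions via Borel sets). If f : ℂ^S → ℂ is a bounded continuous function with respect to the product topology, then there exists a countable subset {s₁, s₂, …} ⊆ S and a function f̃ : ℂ^ℕ → ℂ such that f(t) = f̃(t(s₁), t(s₂), …) for all t ∈ ℂ^S (Bockstein's theorem). -/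
open MeasureTheory Topology Filter

open scoped Classical

/-- Keep the coordinates in `A`, zero elsewhere. -/
noncomputable def prj {S : Type*} (A : Set S) (t : S → ℂ) : S → ℂ :=
  fun s => if s ∈ A then t s else 0

/-- Basic neighborhood lemma: a continuous function is controlled on a basic open set
depending on finitely many coordinates. -/
lemma nbhd' {S : Type*} (f : (S → ℂ) → ℂ) (hf : Continuous f) (x : S → ℂ)
    {ε : ℝ} (hε : 0 < ε) :
    ∃ (G : Finset S) (U : S → Set ℂ), (∀ s ∈ G, IsOpen (U s) ∧ x s ∈ U s) ∧
      ∀ u : S → ℂ, (∀ s ∈ G, u s ∈ U s) → dist (f u) (f x) < ε := by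
  have hx : x ∈ f ⁻¹' Metric.ball (f x) ε := by simp [hε]
  obtain ⟨I, u, h1, h2⟩ :=
    (isOpen_pi_iff.1 (Metric.isOpen_ball.preimage hf)) x hx
  refine ⟨I, u, fun s hs => h1 s hs, fun v hv => ?_⟩
  have hvmem : v ∈ (I : Set S).pi u := fun s hs => hv s hs
  have := h2 hvmem
  simpa [Metric.mem_ball] using this

/-- Closing-off step: given a countable set of coordinates (range of `e`), produce a larger
countable set (range of `e'`) such that every point supported on `range e` has, for every
`ε > 0`, a basic neighborhood with support in `range e'` on which `f` oscillates by `< ε`. -/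
lemma step' {S : Type*} [Nonempty S] (f : (S → ℂ) → ℂ) (hf : Continuous f) (e : ℕ → S) :
    ∃ e' : ℕ → S, Set.range e ⊆ Set.range e' ∧
      ∀ (t : S → ℂ) (ε : ℝ), 0 < ε → ∃ (G : Finset S) (U : S → Set ℂ),
        ↑G ⊆ Set.range e' ∧ (∀ s ∈ G, prj (Set.range e) t s ∈ U s) ∧
        ∀ u u' : S → ℂ, (∀ s ∈ G, u s ∈ U s) → (∀ s ∈ G, u' s ∈ U s) →
          dist (f u) (f u') < ε := by
  -- parametrize the slice of points supported on `range e` by `ℕ → ℂ`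
  set ψ : (ℕ → ℂ) → (S → ℂ) := fun y s => if h : s ∈ Set.range e then y h.choose else 0
    with hψ
  have hψcont : Continuous ψ := by
    refine continuous_pi fun s => ?_
    by_cases h : s ∈ Set.range e
    · simp only [hψ, dif_pos h]
      exact continuous_apply _
    · simp only [hψ, dif_neg h]
      exact continuous_const
  have hψprj : ∀ t : S → ℂ, ψ (fun n => t (e n)) = prj (Set.range e) t := by
    intro t
    funext s
    by_cases h : s ∈ Set.range e
    · simp only [hψ, dif_pos h, prj, if_pos h]
      exact congrArg t h.choose_spec
    · simp only [hψ, dif_neg h, prj, if_neg h]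
  -- for each scale `k` and parameter `y`, a basic neighborhood of `ψ y`
  have H : ∀ (k : ℕ) (y : ℕ → ℂ),
      ∃ (G : Finset S) (U : S → Set ℂ), (∀ s ∈ G, IsOpen (U s) ∧ ψ y s ∈ U s) ∧
        ∀ u : S → ℂ, (∀ s ∈ G, u s ∈ U s) → dist (f u) (f (ψ y)) < 1 / (k + 1) := by
    intro k y
    exact nbhd' f hf (ψ y) (by positivity)
  choose G U hGU hball using H
  -- Lindelöf argument in the second-countable space `ℕ → ℂ`
  have hW : ∀ (k : ℕ) (y : ℕ → ℂ), IsOpen (ψ ⁻¹' (Set.pi ↑(G k y) (U k y))) := by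
    intro k y
    exact (isOpen_set_pi (Finset.finite_toSet _)
      (fun s hs => (hGU k y s hs).1)).preimage hψcont
  have hcov : ∀ (k : ℕ) (y : ℕ → ℂ), y ∈ ψ ⁻¹' (Set.pi ↑(G k y) (U k y)) := by
    intro k y
    exact fun s hs => (hGU k y s hs).2
  have hT : ∀ k : ℕ, ∃ T : Set (ℕ → ℂ), T.Countable ∧
      ⋃ y ∈ T, ψ ⁻¹' (Set.pi ↑(G k y) (U k y)) = ⋃ y, ψ ⁻¹' (Set.pi ↑(G k y) (U k y)) :=
    fun k => TopologicalSpace.isOpen_iUnion_countable _ (hW k)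
  choose T hTc hTU using hT
  -- the enlarged countable coordinate set
  set B : Set S := Set.range e ∪ ⋃ (k : ℕ), ⋃ y ∈ T k, (↑(G k y) : Set S) with hB
  have hBc : B.Countable := by
    refine (Set.countable_range e).union ?_
    exact Set.countable_iUnion fun k =>
      (hTc k).biUnion fun y _ => (G k y).countable_toSet
  have hBne : B.Nonempty := ⟨e 0, Or.inl ⟨0, rfl⟩⟩
  obtain ⟨e', he'⟩ := hBc.exists_eq_range hBne
  refine ⟨e', ?_, ?_⟩
  · rw [← he']
    exact Set.subset_union_left
  · intro t ε hε
    obtain ⟨k, hk⟩ := exists_nat_one_div_lt (half_pos hε)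
    set y : ℕ → ℂ := fun n => t (e n)
    have hy : y ∈ ⋃ y', ψ ⁻¹' (Set.pi ↑(G k y') (U k y')) :=
      Set.mem_iUnion.2 ⟨y, hcov k y⟩
    rw [← hTU k] at hy
    obtain ⟨y₀, hy₀T, hy₀⟩ := Set.mem_iUnion₂.1 hy
    refine ⟨G k y₀, U k y₀, ?_, ?_, ?_⟩
    · rw [← he']
      intro s hs
      exact Or.inr (Set.mem_iUnion.2 ⟨k, Set.mem_iUnion₂.2 ⟨y₀, hy₀T, hs⟩⟩)
    · intro s hs
      have : ψ y ∈ Set.pi ↑(G k y₀) (U k y₀) := hy₀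
      rw [hψprj t] at this
      exact this s hs
    · intro u u' hu hu'
      have h1 := hball k y₀ u hu
      have h2 := hball k y₀ u' hu'
      calc dist (f u) (f u') ≤ dist (f u) (f (ψ y₀)) + dist (f (ψ y₀)) (f u') :=
            dist_triangle _ _ _
        _ < 1 / (k + 1) + 1 / (k + 1) :=
            add_lt_add h1 (by rw [dist_comm]; exact h2)
        _ < ε / 2 + ε / 2 := add_lt_add hk hk
        _ = ε := add_halves ε

/-- A continuous function on `ℂ^S` depends only on countably many coordinates. -/
theorem key' {S : Type*} [Nonempty S] (f : (S → ℂ) → ℂ) (hf : Continuous f) :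
    ∃ s : ℕ → S, ∀ t, f t = f (prj (Set.range s) t) := by
  choose Φ hΦ1 hΦ2 using step' f hf
  set E : ℕ → (ℕ → S) := fun n => Φ^[n] (fun _ => Classical.arbitrary S) with hE
  have hEsucc : ∀ n, E (n + 1) = Φ (E n) := fun n =>
    Function.iterate_succ_apply' Φ n _
  have hmono : ∀ m n, m ≤ n → Set.range (E m) ⊆ Set.range (E n) := by
    intro m n h
    induction h with
    | refl => exact subset_rfl
    | @step n' h' ih =>
        exact ih.trans (by rw [hEsucc n']; exact hΦ1 (E n'))
  set s : ℕ → S := fun m => E m.unpair.1 m.unpair.2 with hs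
  set A : Set S := Set.range s with hA
  have hEA : ∀ n, Set.range (E n) ⊆ A := by
    rintro n _ ⟨m, rfl⟩
    exact ⟨Nat.pair n m, by simp [hs, Nat.unpair_pair]⟩
  have hAE : ∀ x ∈ A, ∃ n, x ∈ Set.range (E n) := by
    rintro _ ⟨m, rfl⟩
    exact ⟨m.unpair.1, ⟨m.unpair.2, rfl⟩⟩
  refine ⟨s, fun t => ?_⟩
  have hdist : ∀ ε : ℝ, 0 < ε → dist (f t) (f (prj A t)) ≤ ε := by
    intro ε hε
    -- for each `n`, a basic neighborhood of `prj (range (E n)) t` supported in `A`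
    have Hn : ∀ n : ℕ, ∃ (G : Finset S) (U : S → Set ℂ),
        ↑G ⊆ Set.range (E (n + 1)) ∧ (∀ s' ∈ G, prj (Set.range (E n)) t s' ∈ U s') ∧
        ∀ u u' : S → ℂ, (∀ s' ∈ G, u s' ∈ U s') → (∀ s' ∈ G, u' s' ∈ U s') →
          dist (f u) (f u') < ε := by
      intro n
      have := hΦ2 (E n) t ε hε
      rw [← hEsucc n] at this
      exact this
    choose G U hGsub hmem hosc using Hn
    -- the two approximating sequences
    set yy : ℕ → (S → ℂ) := fun n => prj (Set.range (E n)) t with hyy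
    set zz : ℕ → (S → ℂ) := fun n s' => if s' ∈ A then yy n s' else t s' with hzz
    have hGA : ∀ n, (↑(G n) : Set S) ⊆ A := fun n => (hGsub n).trans (hEA (n + 1))
    have hzmem : ∀ n, ∀ s' ∈ G n, zz n s' ∈ U n s' := by
      intro n s' hs'
      have hsA : s' ∈ A := hGA n hs'
      simp only [hzz, if_pos hsA]
      exact hmem n s' hs'
    have hstep : ∀ n, dist (f (zz n)) (f (yy n)) < ε := fun n =>
      hosc n (zz n) (yy n) (hzmem n) (hmem n)
    -- `zz n → t` pointwise
    have hzt : Tendsto zz atTop (𝓝 t) := by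
      rw [tendsto_pi_nhds]
      intro s'
      by_cases hsA : s' ∈ A
      · obtain ⟨m, hm⟩ := hAE s' hsA
        have hev : ∀ n ≥ m, zz n s' = t s' := by
          intro n hn
          simp only [hzz, if_pos hsA, hyy, prj, if_pos (hmono m n hn hm)]
        exact tendsto_const_nhds.congr'
          (eventually_atTop.2 ⟨m, fun n hn => (hev n hn).symm⟩)
      · have : ∀ n, zz n s' = t s' := fun n => by simp only [hzz, if_neg hsA]
        simpa [this] using (tendsto_const_nhds : Tendsto (fun _ : ℕ => t s') atTop _)
    -- `yy n → prj A t` pointwise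
    have hyt : Tendsto yy atTop (𝓝 (prj A t)) := by
      rw [tendsto_pi_nhds]
      intro s'
      by_cases hsA : s' ∈ A
      · obtain ⟨m, hm⟩ := hAE s' hsA
        have hev : ∀ n ≥ m, yy n s' = prj A t s' := by
          intro n hn
          simp only [hyy, prj, if_pos (hmono m n hn hm), if_pos hsA]
        exact tendsto_const_nhds.congr'
          (eventually_atTop.2 ⟨m, fun n hn => (hev n hn).symm⟩)
      · have hval : ∀ n, yy n s' = prj A t s' := by
          intro n
          have hns : s' ∉ Set.range (E n) := fun h => hsA (hEA n h)
          simp only [hyy, prj, if_neg hns, if_neg hsA]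
        simpa [hval] using
          (tendsto_const_nhds : Tendsto (fun _ : ℕ => prj A t s') atTop _)
    have hlim : Tendsto (fun n => dist (f (zz n)) (f (yy n))) atTop
        (𝓝 (dist (f t) (f (prj A t)))) :=
      ((hf.tendsto t).comp hzt).dist ((hf.tendsto (prj A t)).comp hyt)
    exact le_of_tendsto hlim (Eventually.of_forall fun n => (hstep n).le)
  have h0 : dist (f t) (f (prj A t)) ≤ 0 := by
    have := le_of_forall_pos_le_add (a := dist (f t) (f (prj A t))) (b := 0)
      (fun ε hε => by simpa using hdist ε hε)
    exact this
  exact eq_of_dist_eq_zero (le_antisymm h0 dist_nonneg)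

/-- **Bockstein's theorem.** Let `S` be a nonempty set and `η` a probability
measure on `ℂ^S`. Every bounded continuous function `f : ℂ^S → ℂ` (product topology) depends
only on countably many coordinates: there are `s₁, s₂, … ∈ S` and `f̃ : ℂ^ℕ → ℂ` with
`f(t) = f̃(t(s₁), t(s₂), …)` for all `t`. -/
theorem stmt13 {S : Type*} [Nonempty S]
    (η : Measure (S → ℂ)) (hη : IsProbabilityMeasure η)
    (f : (S → ℂ) → ℂ) (hf : Continuous f) (hbd : ∃ M : ℝ, ∀ t, ‖f t‖ ≤ M) :
    ∃ (s : ℕ → S) (f' : (ℕ → ℂ) → ℂ), ∀ t : S → ℂ, f t = f' fun n => t (s n) := by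
  obtain ⟨s, hs⟩ := key' f hf
  refine ⟨s, fun y => f (fun s' => if h : s' ∈ Set.range s then y h.choose else 0), fun t => ?_⟩
  rw [hs t]
  congr 1
  funext s'
  by_cases h : s' ∈ Set.range s
  · simp only [prj, if_pos h, dif_pos h]
    exact (congrArg t h.choose_spec).symm
  · simp only [prj, if_neg h, dif_neg h]
end
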